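/- The gate B(θ,φ) equals F · (P(φ) ⊕ R_x(θ)†) · F, where F is the reflected CNOT, P(φ) = diag(1, e^{iφ}), and R_x(θ) = [[cos(θ/2), -i sin(θ/2)],[-i sin(θ/2), cos(θ/2)]]. -/
import Mathlib

open Matrix Complex

def Fgate : Matrix (Fin 4) (Fin 4) ℂ :=
  !![1, 0, 0, 0;
     0, 0, 0, 1;
     0, 0, 1, 0;
     0, 1, 0, 0]

noncomputable def Bgate (θ φ : ℝ) : Matrix (Fin 4) (Fin 4) ℂ :=
  !![1, 0, 0, 0;
     0, Real.cos (θ / 2), Complex.I * Real.sin (θ / 2), 0;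
     0, Complex.I * Real.sin (θ / 2), Real.cos (θ / 2), 0;
     0, 0, 0, Complex.exp (Complex.I * φ)]

noncomputable def Rx (θ : ℝ) : Matrix (Fin 2) (Fin 2) ℂ :=
  !![Real.cos (θ / 2), -Complex.I * Real.sin (θ / 2);
     -Complex.I * Real.sin (θ / 2), Real.cos (θ / 2)]

/-- the block-diagonal gate `P(φ) ⊕ R_x(θ)†` with `P(φ) = diag(1, e^{iφ})`. -/
noncomputable def PRx (θ φ : ℝ) : Matrix (Fin 4) (Fin 4) ℂ :=
  !![1, 0, 0, 0;
     0, Complex.exp (Complex.I * φ), 0, 0;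
     0, 0, (Rx θ)ᴴ 0 0, (Rx θ)ᴴ 0 1;
     0, 0, (Rx θ)ᴴ 1 0, (Rx θ)ᴴ 1 1]

theorem Bgate_eq_F_PRx_F (θ φ : ℝ) : Bgate θ φ = Fgate * PRx θ φ * Fgate := by
  ext i j
  fin_cases i <;> fin_cases j <;>
    simp [Bgate, Fgate, PRx, Rx, Matrix.mul_apply, Fin.sum_univ_succ, conjTranspose_apply,
      ← Complex.ofReal_cos, ← Complex.ofReal_sin, Complex.conj_ofReal, vecHead, vecTail]
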